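/- Let S be any semigroup and x ∈ S an element satisfying x² = x³ (so that x² is an idempotent). Then for every finite-dimensional complex representation φ of S one has χ_φ(x) = χ_φ(x²); that is, x ≡ x². In particular, in the semigroup ⟨x : x² = x³⟩ the elements x and x² are conjugate in the character sense but not conjugate, so the equivalence of ∼ and ≡ fails for non-regular semigroups. -/

import Mathlib

universe u

namespace SgConjPaper

/-- `spow x n = x^(n+1)`: positive powers of an element of a semigroup. -/
def spow {S : Type*} [Semigroup S] (x : S) : ℕ → S
  | 0 => x
  | n + 1 => spow x n * x

/-- `a` lies in the maximal subgroup of `S` whose identity is the idempotent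
`e` (i.e. `e` is a two-sided identity for `a` and `a` is invertible over `e`). -/
def InMaxSubgroup {S : Type*} [Semigroup S] (e a : S) : Prop :=
  e * a = a ∧ a * e = a ∧ ∃ b : S, e * b = b ∧ b * e = b ∧ a * b = e ∧ b * a = e

/-- `e` is the idempotent `e_x`: the identity of the maximal subgroup
containing some positive power of `x`. -/
def IsEIdem {S : Type*} [Semigroup S] (x e : S) : Prop :=
  ∃ k : ℕ, InMaxSubgroup e (spow x k)

/-- A semigroup is group-bound if some positive power of every element lies
in a subgroup. -/
def GroupBound (S : Type*) [Semigroup S] : Prop := ∀ x : S, ∃ e : S, IsEIdem x e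

/-- Primary conjugacy: `x = uv`, `y = vu` for some `u, v ∈ S¹`. -/
def PrimConj {S : Type*} [Semigroup S] (x y : S) : Prop :=
  ∃ u v : WithOne S, (x : WithOne S) = u * v ∧ (y : WithOne S) = v * u

/-- Conjugacy `∼`: the transitive closure of primary conjugacy. -/
def SgConj {S : Type*} [Semigroup S] : S → S → Prop := Relation.TransGen PrimConj

/-- Conjugacy in the character sense `≡`: equal traces under every
finite-dimensional complex representation. -/
def CharEq {S : Type*} [Semigroup S] (x y : S) : Prop :=
  ∀ (V : Type) (_ : AddCommGroup V) (_ : Module ℂ V) (_ : FiniteDimensional ℂ V)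
    (φ : S →ₙ* Module.End ℂ V),
    LinearMap.trace ℂ V (φ x) = LinearMap.trace ℂ V (φ y)

/-- A semigroup is regular if for every `a` there is `b` with `a = aba`. -/
def Regular (S : Type*) [Semigroup S] : Prop := ∀ a : S, ∃ b : S, a * b * a = a

/-- The monogenic semigroup `⟨x : x² = x³⟩`, whose two distinct elements are
`x` and `x²` (so that all products equal `x²`). -/
inductive M5 : Type
  | x : M5
  | xsq : M5
deriving DecidableEq

instance : Semigroup M5 where
  mul _ _ := M5.xsq
  mul_assoc _ _ _ := rfl

/-! `x - x²` squares to `x² - 2x³ + x⁴ = 0`, so every representation sends it to a nilpotent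
endomorphism, whose trace vanishes. In `⟨x : x² = x³⟩` the generator `x` is not a product, so a
factorisation `x = uv` in `S¹` has `u = 1` or `v = 1`, forcing `vu = uv = x`: the conjugacy class of
`x` is `{x}`. -/

theorem isNilpotent_sub_mul_self_of_mul_self_eq {R : Type*} [Ring R] {a : R}
    (h : a * a = a * a * a) : IsNilpotent (a - a * a) := by
  refine ⟨2, ?_⟩
  calc (a - a * a) ^ 2 = a * a - a * (a * a) - a * a * a + a * a * (a * a) := by noncomm_ring
    _ = 0 := by rw [← mul_assoc, ← mul_assoc, ← h, ← h]; abel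

theorem trace_eq_trace_mul_self_of_mul_self_eq {R M : Type*} [CommRing R] [IsReduced R]
    [AddCommGroup M] [Module R M] {f : Module.End R M} (h : f * f = f * f * f) :
    LinearMap.trace R M f = LinearMap.trace R M (f * f) := by
  rw [← sub_eq_zero, ← map_sub]
  exact (LinearMap.isNilpotent_trace_of_isNilpotent
    (isNilpotent_sub_mul_self_of_mul_self_eq h)).eq_zero

theorem CharEq.mul_self_of_mul_self_eq {S : Type*} [Semigroup S] {x : S}
    (h : x * x = x * x * x) : CharEq x (x * x) := by
  intro V _ _ _ φ
  rw [map_mul]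
  exact trace_eq_trace_mul_self_of_mul_self_eq (by simpa only [map_mul] using congrArg φ h)

theorem PrimConj.eq_of_forall_mul_ne {S : Type*} [Semigroup S] {x y : S}
    (hx : ∀ a b : S, a * b ≠ x) (h : PrimConj x y) : y = x := by
  obtain ⟨u, v, hxuv, hyvu⟩ := h
  have hcomm : v * u = u * v := by
    induction u using WithOne.recOneCoe with
    | one => rw [one_mul, mul_one]
    | coe a =>
      induction v using WithOne.recOneCoe with
      | one => rw [one_mul, mul_one]
      | coe b => exact absurd (WithOne.coe_inj.mp hxuv).symm (hx a b)
  exact WithOne.coe_inj.mp (by rw [hyvu, hcomm, hxuv])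

theorem SgConj.eq_of_forall_mul_ne {S : Type*} [Semigroup S] {x y : S}
    (hx : ∀ a b : S, a * b ≠ x) (h : SgConj x y) : y = x := by
  induction h with
  | single hxy => exact hxy.eq_of_forall_mul_ne hx
  | tail _ hyz ih => rw [ih] at hyz; exact hyz.eq_of_forall_mul_ne hx

theorem M5.mul_ne_x (a b : M5) : a * b ≠ M5.x := M5.noConfusion

/-- if `x² = x³` in a semigroup `S` then `x ≡ x²`; in
particular in `⟨x : x² = x³⟩` the elements `x` and `x²` are conjugate in the
character sense but not conjugate, so the equivalence of `∼` and `≡` fails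
for non-regular semigroups. -/
theorem charEq_of_sq_eq_cube :
    (∀ (S : Type u) (_ : Semigroup S) (x : S), x * x = x * x * x → CharEq x (x * x)) ∧
    (CharEq M5.x (M5.x * M5.x) ∧ ¬ SgConj M5.x (M5.x * M5.x)) :=
  ⟨fun _ _ _ h => CharEq.mul_self_of_mul_self_eq h,
    CharEq.mul_self_of_mul_self_eq rfl,
    fun h => absurd (h.eq_of_forall_mul_ne M5.mul_ne_x) (by decide)⟩

end SgConjPaper
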